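/- arXiv:1807.02102 — 5 statements merged into one kernel-verified Lean document; each statement's English description precedes it below -/
import Mathlib

section
/- Let A be a well-structured pomset automaton and q →^U_A q′ a run. Then: (i) the run is trivial if and only if U is the empty pomset; (ii) it is a sequential unit run if and only if U is primitive; (iii) it is a composite run if and only if U is sequential; (iv) it is a parallel unit run if and only if U is parallel. -/
namespace WBKA

/-- Series-parallel terms over an alphabet `A`. -/
inductive SPTerm (A : Type) : Type
  | one : SPTerm A
  | atom : A → SPTerm A
  | seq : SPTerm A → SPTerm A → SPTerm A
  | par : SPTerm A → SPTerm A → SPTerm A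

/-- The congruence generated by the series-parallel pomset axioms:
associativity of both compositions, commutativity of parallel composition,
and the empty pomset acting as unit for both. -/
inductive SPEquiv {A : Type} : SPTerm A → SPTerm A → Prop
  | refl (u : SPTerm A) : SPEquiv u u
  | symm {u v : SPTerm A} : SPEquiv u v → SPEquiv v u
  | trans {u v w : SPTerm A} : SPEquiv u v → SPEquiv v w → SPEquiv u w
  | seqCongr {u u' v v' : SPTerm A} :
      SPEquiv u u' → SPEquiv v v' → SPEquiv (u.seq v) (u'.seq v')
  | parCongr {u u' v v' : SPTerm A} :
      SPEquiv u u' → SPEquiv v v' → SPEquiv (u.par v) (u'.par v')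
  | seqAssoc (u v w : SPTerm A) : SPEquiv ((u.seq v).seq w) (u.seq (v.seq w))
  | parAssoc (u v w : SPTerm A) : SPEquiv ((u.par v).par w) (u.par (v.par w))
  | parComm (u v : SPTerm A) : SPEquiv (u.par v) (v.par u)
  | seqOneLeft (u : SPTerm A) : SPEquiv (SPTerm.one.seq u) u
  | seqOneRight (u : SPTerm A) : SPEquiv (u.seq SPTerm.one) u
  | parOne (u : SPTerm A) : SPEquiv (u.par SPTerm.one) u

instance spSetoid (A : Type) : Setoid (SPTerm A) :=
  ⟨SPEquiv, SPEquiv.refl, SPEquiv.symm, SPEquiv.trans⟩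

/-- Series-parallel pomsets over `A`, as the free algebra on the sp-pomset axioms. -/
def Pomset (A : Type) : Type := Quotient (spSetoid A)

namespace Pomset

variable {A : Type}

def mk (u : SPTerm A) : Pomset A := Quotient.mk (spSetoid A) u

/-- The empty pomset `1`. -/
def eps : Pomset A := mk SPTerm.one

/-- The primitive pomset consisting of a single event labelled `a`. -/
def atom (a : A) : Pomset A := mk (SPTerm.atom a)

/-- Sequential composition of pomsets. -/
def seq : Pomset A → Pomset A → Pomset A :=
  Quotient.lift₂ (fun u v => mk (u.seq v))
    (fun _ _ _ _ hu hv => Quotient.sound (SPEquiv.seqCongr hu hv))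

/-- Parallel composition of pomsets. -/
def par : Pomset A → Pomset A → Pomset A :=
  Quotient.lift₂ (fun u v => mk (u.par v))
    (fun _ _ _ _ hu hv => Quotient.sound (SPEquiv.parCongr hu hv))

/-- `U` is the empty pomset. -/
def IsEmptyP (U : Pomset A) : Prop := U = eps

/-- `U` is primitive: it consists of a single labelled event. -/
def Primitive (U : Pomset A) : Prop := ∃ a : A, U = atom a

/-- `U` is sequential: a sequential composition of two non-empty pomsets. -/
def Sequential (U : Pomset A) : Prop :=
  ∃ V W : Pomset A, V ≠ eps ∧ W ≠ eps ∧ U = seq V W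

/-- `U` is parallel: a parallel composition of two non-empty pomsets. -/
def Parallel (U : Pomset A) : Prop :=
  ∃ V W : Pomset A, V ≠ eps ∧ W ≠ eps ∧ U = par V W

/-- `U` is a sequential prime. -/
def SeqPrime (U : Pomset A) : Prop :=
  U ≠ eps ∧ ∀ V W : Pomset A, U = seq V W → V = eps ∨ W = eps

/-- `U` is a parallel prime. -/
def ParPrime (U : Pomset A) : Prop :=
  U ≠ eps ∧ ∀ V W : Pomset A, U = par V W → V = eps ∨ W = eps

/-- Sequential product of a list of pomsets. -/
def seqProd (l : List (Pomset A)) : Pomset A := l.foldr seq eps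

/-- Parallel product of a list of pomsets. -/
def parProd (l : List (Pomset A)) : Pomset A := l.foldr par eps

end Pomset

/-- Pointwise sequential composition of pomset languages. -/
def langSeq {A : Type} (L M : Set (Pomset A)) : Set (Pomset A) :=
  Set.image2 Pomset.seq L M

/-- Pointwise parallel composition of pomset languages. -/
def langPar {A : Type} (L M : Set (Pomset A)) : Set (Pomset A) :=
  Set.image2 Pomset.par L M

/-- `n`-fold sequential power of a language. -/
def langPow {A : Type} (L : Set (Pomset A)) : ℕ → Set (Pomset A)
  | 0 => {Pomset.eps}
  | n + 1 => langSeq L (langPow L n)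

/-- Kleene closure of a pomset language. -/
def langStar {A : Type} (L : Set (Pomset A)) : Set (Pomset A) :=
  ⋃ n : ℕ, langPow L n

/-- Series-rational expressions over `A`. -/
inductive SR (A : Type) : Type
  | zero : SR A
  | one : SR A
  | atom : A → SR A
  | plus : SR A → SR A → SR A
  | seq : SR A → SR A → SR A
  | par : SR A → SR A → SR A
  | star : SR A → SR A

/-- The sp-language semantics of series-rational expressions. -/
def sem {A : Type} : SR A → Set (Pomset A)
  | .zero => ∅
  | .one => {Pomset.eps}
  | .atom a => {Pomset.atom a}
  | .plus e f => sem e ∪ sem f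
  | .seq e f => langSeq (sem e) (sem f)
  | .par e f => langPar (sem e) (sem f)
  | .star e => langStar (sem e)

/-- The syntactic predicate `F` characterising acceptance of the empty pomset. -/
inductive EF {A : Type} : SR A → Prop
  | one : EF SR.one
  | plusLeft {e : SR A} (f : SR A) : EF e → EF (SR.plus e f)
  | plusRight (e : SR A) {f : SR A} : EF f → EF (SR.plus e f)
  | seq {e f : SR A} : EF e → EF f → EF (SR.seq e f)
  | par {e f : SR A} : EF e → EF f → EF (SR.par e f)
  | star (e : SR A) : EF (SR.star e)

/-- Pomset automata. -/
structure PA (A : Type) (Q : Type) where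
  acc : Set Q
  δ : Q → A → Set Q
  γ : Q → Multiset Q → Set Q

/-- The run relation of a pomset automaton. -/
inductive Run {A Q : Type} (M : PA A Q) : Q → Pomset A → Q → Prop
  | triv (q : Q) : Run M q Pomset.eps q
  | seqUnit {q : Q} {a : A} {q' : Q} :
      q' ∈ M.δ q a → Run M q (Pomset.atom a) q'
  | comp {q : Q} {U : Pomset A} {q'' : Q} {V : Pomset A} {q' : Q} :
      Run M q U q'' → Run M q'' V q' → Run M q (U.seq V) q'
  | parUnit {q q' : Q} (l : List (Q × Pomset A × Q)) :
      q' ∈ M.γ q (↑(l.map Prod.fst) : Multiset Q) →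
      (∀ x ∈ l, x.2.2 ∈ M.acc) →
      (∀ x ∈ l, Run M x.1 x.2.1 x.2.2) →
      Run M q (Pomset.parProd (l.map fun x => x.2.1)) q'

/-- Language of a state of a pomset automaton. -/
def PA.lang {A Q : Type} (M : PA A Q) (q : Q) : Set (Pomset A) :=
  {U | ∃ q' ∈ M.acc, Run M q U q'}

/-- The triple `q →^U q'` matches the trivial-run rule. -/
def TrivialRun {A Q : Type} (_M : PA A Q) (q : Q) (U : Pomset A) (q' : Q) : Prop :=
  U = Pomset.eps ∧ q = q'

/-- `q →^U q'` is a sequential unit run. -/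
def SeqUnitRun {A Q : Type} (M : PA A Q) (q : Q) (U : Pomset A) (q' : Q) : Prop :=
  ∃ a : A, U = Pomset.atom a ∧ q' ∈ M.δ q a

/-- `q →^U q'` is a parallel unit run. -/
def ParUnitRun {A Q : Type} (M : PA A Q) (q : Q) (U : Pomset A) (q' : Q) : Prop :=
  ∃ l : List (Q × Pomset A × Q),
    q' ∈ M.γ q (↑(l.map Prod.fst) : Multiset Q) ∧
    (∀ x ∈ l, x.2.2 ∈ M.acc ∧ Run M x.1 x.2.1 x.2.2) ∧
    U = Pomset.parProd (l.map fun x => x.2.1)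

/-- `q →^U q'` is a unit run: a sequential or a parallel unit run. -/
def UnitRun {A Q : Type} (M : PA A Q) (q : Q) (U : Pomset A) (q' : Q) : Prop :=
  SeqUnitRun M q U q' ∨ ParUnitRun M q U q'

/-- `q →^U q'` is a composite run: a sequential composition of two non-trivial runs. -/
def CompositeRun {A Q : Type} (M : PA A Q) (q : Q) (U : Pomset A) (q' : Q) : Prop :=
  ∃ (V W : Pomset A) (q'' : Q),
    U = V.seq W ∧ Run M q V q'' ∧ Run M q'' W q' ∧
    ¬ TrivialRun M q V q'' ∧ ¬ TrivialRun M q'' W q'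

/-- The support preorder: `Supports M q' q` means `q' ⪯ q`. -/
inductive Supports {A Q : Type} (M : PA A Q) : Q → Q → Prop
  | refl (q : Q) : Supports M q q
  | trans {q r p : Q} : Supports M q r → Supports M r p → Supports M q p
  | deltaStep {q : Q} {a : A} {q' : Q} : q' ∈ M.δ q a → Supports M q' q
  | gammaStep {q : Q} {φ : Multiset Q} {q' : Q} : q' ∈ M.γ q φ → Supports M q' q
  | forkStep {q : Q} {φ : Multiset Q} {r : Q} :
      r ∈ φ → (M.γ q φ).Nonempty → Supports M r q

/-- A pomset automaton is fork-acyclic when every fork target `r` of `q`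
satisfies `r ≺ q`, i.e. `q ⋠ r`. -/
def ForkAcyclic {A Q : Type} (M : PA A Q) : Prop :=
  ∀ (q : Q) (φ : Multiset Q) (r : Q),
    r ∈ φ → (M.γ q φ).Nonempty → ¬ Supports M q r

/-- A set of states is support-closed. -/
def SupportClosed {A Q : Type} (M : PA A Q) (S : Set Q) : Prop :=
  ∀ q ∈ S, ∀ q' : Q, Supports M q' q → q' ∈ S

/-- Restriction of a pomset automaton to a set of states. -/
def PA.restrict {A Q : Type} (M : PA A Q) (S : Set Q) : PA A {q : Q // q ∈ S} where
  acc := {q | q.val ∈ M.acc}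
  δ := fun q a => {r | r.val ∈ M.δ q.val a}
  γ := fun q φ => {r | r.val ∈ M.γ q.val (φ.map Subtype.val)}

/-- `n`-forking automata. -/
def NForking {A Q : Type} (M : PA A Q) (n : ℕ) : Prop :=
  ∀ (q : Q) (φ : Multiset Q), (M.γ q φ).Nonempty → n ≤ Multiset.card φ

/-- Parsimonious automata: no fork target accepts the empty pomset. -/
def Parsimonious {A Q : Type} (M : PA A Q) : Prop :=
  ∀ (p : Q) (φ : Multiset Q) (q : Q),
    q ∈ φ → (M.γ p φ).Nonempty → Pomset.eps ∉ M.lang q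

/-- Flat-branching automata: forks from fork targets never reach accepting states. -/
def FlatBranching {A Q : Type} (M : PA A Q) : Prop :=
  ∀ (p : Q) (φ : Multiset Q) (q : Q),
    q ∈ φ → (M.γ p φ).Nonempty → ∀ ψ : Multiset Q, M.γ q ψ ∩ M.acc = ∅

/-- Well-structured pomset automata. -/
def WellStructured {A Q : Type} (M : PA A Q) : Prop :=
  (∀ (q : Q) (φ : Multiset Q), (M.γ q φ).Nonempty → 2 ≤ Multiset.card φ) ∧
  ∀ (p : Q) (φ : Multiset Q) (q : Q), q ∈ φ → (M.γ p φ).Nonempty →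
    q ∉ M.acc ∧ ∀ ψ : Multiset Q, M.γ q ψ ∩ M.acc = ∅

/-- The relation `⇝` characterising runs labelled by the empty pomset. -/
inductive Leadsto {A Q : Type} (M : PA A Q) : Q → Q → Prop
  | refl (p : Q) : Leadsto M p p
  | trans {p r q : Q} : Leadsto M p r → Leadsto M r q → Leadsto M p q
  | fork {p q : Q} (l : List (Q × Q)) :
      q ∈ M.γ p (↑(l.map Prod.fst) : Multiset Q) →
      (∀ x ∈ l, x.2 ∈ M.acc) →
      (∀ x ∈ l, Leadsto M x.1 x.2) →
      Leadsto M p q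

/-- Concatenate each expression of a set with `f` on the right. -/
def seqAfter {A : Type} (T : Set (SR A)) (f : SR A) : Set (SR A) :=
  (fun g => SR.seq g f) '' T

/-- Antimirov-style sequential derivatives of sr-expressions. -/
def deltaS {A : Type} : SR A → A → Set (SR A)
  | .zero, _ => ∅
  | .one, _ => ∅
  | .atom b, a => {g | g = SR.one ∧ a = b}
  | .plus e f, a => deltaS e a ∪ deltaS f a
  | .seq e f, a => seqAfter (deltaS e a) f ∪ {g | g ∈ deltaS f a ∧ EF e}
  | .par _ _, _ => ∅
  | .star e, a => seqAfter (deltaS e a) (SR.star e)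

/-- Antimirov-style parallel derivatives of sr-expressions. -/
def gammaS {A : Type} : SR A → Multiset (SR A) → Set (SR A)
  | .zero, _ => ∅
  | .one, _ => ∅
  | .atom _, _ => ∅
  | .plus e f, φ => gammaS e φ ∪ gammaS f φ
  | .seq e f, φ => seqAfter (gammaS e φ) f ∪ {g | g ∈ gammaS f φ ∧ EF e}
  | .par e f, φ => {g | g = SR.one ∧ φ = {e, f}}
  | .star e, φ => seqAfter (gammaS e φ) (SR.star e)

/-- The syntactic pomset automaton on sr-expressions. -/
def synPA (A : Type) : PA A (SR A) where
  acc := {e | EF e}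
  δ := deltaS
  γ := gammaS

/-- The parallel-nesting depth of an sr-expression. -/
def pdepth {A : Type} : SR A → ℕ
  | .zero => 0
  | .one => 0
  | .atom _ => 0
  | .plus e f => max (pdepth e) (pdepth f)
  | .seq e f => max (pdepth e) (pdepth f)
  | .par e f => max (pdepth e) (pdepth f) + 1
  | .star e => pdepth e

/-- A substitution `ζ : Σ → 2^{SP(Δ)}` is atomic. -/
def Atomic {A B : Type} (ζ : A → Set (Pomset B)) : Prop :=
  (∀ a : A, ∀ U ∈ ζ a, Pomset.SeqPrime U) ∧
  (∀ a b : A, (ζ a ∩ ζ b).Nonempty ↔ a = b)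

/-- Extension of a substitution to words. -/
def substWord {A B : Type} (ζ : A → Set (Pomset B)) : List A → Set (Pomset B)
  | [] => {Pomset.eps}
  | a :: w => langSeq (ζ a) (substWord ζ w)

/-- Extension of a substitution to word languages. -/
def substLang {A B : Type} (ζ : A → Set (Pomset B)) (L : Set (List A)) :
    Set (Pomset B) :=
  ⋃ w ∈ L, substWord ζ w

/-- `L_A(α)` for a set `α` of states: the atom language of `α`. -/
def atomLang {Q U : Type} (LA : Q → Set U) (α : Set Q) : Set U :=
  (⋂ q ∈ α, LA q) \ (⋃ (q : Q) (_ : q ∉ α), LA q)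


section Aux
variable {A : Type}

/-- Number of atoms in an sp-term. -/
def nT : SPTerm A → ℕ
  | .one => 0
  | .atom _ => 1
  | .seq u v => nT u + nT v
  | .par u v => nT u + nT v

/-- Auxiliary combinator for factor counts. -/
def fAux (a x b y : ℕ) : ℕ := if a = 0 then y else if b = 0 then x else 1

/-- Number of top-level sequential factors. -/
def slT : SPTerm A → ℕ
  | .one => 0
  | .atom _ => 1
  | .seq u v => slT u + slT v
  | .par u v => fAux (nT u) (slT u) (nT v) (slT v)

/-- Number of top-level parallel factors. -/
def plT : SPTerm A → ℕ
  | .one => 0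
  | .atom _ => 1
  | .seq u v => fAux (nT u) (plT u) (nT v) (plT v)
  | .par u v => plT u + plT v

lemma slT_zero_iff : ∀ u : SPTerm A, slT u = 0 ↔ nT u = 0 := by
  intro u
  induction u with
  | one => simp [slT, nT]
  | atom a => simp [slT, nT]
  | seq u v ihu ihv => simp [slT, nT, Nat.add_eq_zero, ihu, ihv]
  | par u v ihu ihv =>
    simp only [slT, nT, fAux, Nat.add_eq_zero]
    split
    · next h => simp [ihv, h]
    · next h =>
      split
      · next h2 => simp [ihu, h, h2]
      · next h2 => simp [h, h2]

lemma plT_zero_iff : ∀ u : SPTerm A, plT u = 0 ↔ nT u = 0 := by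
  intro u
  induction u with
  | one => simp [plT, nT]
  | atom a => simp [plT, nT]
  | par u v ihu ihv => simp [plT, nT, Nat.add_eq_zero, ihu, ihv]
  | seq u v ihu ihv =>
    simp only [plT, nT, fAux, Nat.add_eq_zero]
    split
    · next h => simp [ihv, h]
    · next h =>
      split
      · next h2 => simp [ihu, h, h2]
      · next h2 => simp [h, h2]

lemma slT_big_plT_one : ∀ u : SPTerm A, 2 ≤ slT u → plT u = 1 := by
  intro u
  induction u with
  | one => simp [slT]
  | atom a => simp [slT]
  | seq u v ihu ihv =>
    intro h
    simp only [plT, fAux]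
    split
    · next h0 =>
      apply ihv
      have : slT u = 0 := (slT_zero_iff u).2 h0
      simp only [slT] at h; omega
    · next h0 =>
      split
      · next h1 =>
        apply ihu
        have : slT v = 0 := (slT_zero_iff v).2 h1
        simp only [slT] at h; omega
      · rfl
  | par u v ihu ihv =>
    intro h
    simp only [slT, fAux] at h
    simp only [plT]
    split at h
    · next h0 =>
      have : plT u = 0 := (plT_zero_iff u).2 h0
      rw [this, ihv h]
    · next h0 =>
      split at h
      · next h1 =>
        have : plT v = 0 := (plT_zero_iff v).2 h1
        rw [this, ihu h]
      · omega

lemma plT_big_slT_one : ∀ u : SPTerm A, 2 ≤ plT u → slT u = 1 := by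
  intro u
  induction u with
  | one => simp [plT]
  | atom a => simp [plT]
  | par u v ihu ihv =>
    intro h
    simp only [slT, fAux]
    split
    · next h0 =>
      apply ihv
      have : plT u = 0 := (plT_zero_iff u).2 h0
      simp only [plT] at h; omega
    · next h0 =>
      split
      · next h1 =>
        apply ihu
        have : plT v = 0 := (plT_zero_iff v).2 h1
        simp only [plT] at h; omega
      · rfl
  | seq u v ihu ihv =>
    intro h
    simp only [plT, fAux] at h
    simp only [slT]
    split at h
    · next h0 =>
      have : slT u = 0 := (slT_zero_iff u).2 h0
      rw [this, ihv h]
    · next h0 =>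
      split at h
      · next h1 =>
        have : slT v = 0 := (slT_zero_iff v).2 h1
        rw [this, ihu h]
      · omega

lemma fAux_assoc (a b c x y z : ℕ) (hy : b = 0 → y = 0) :
    fAux (a + b) (fAux a x b y) c z = fAux a x (b + c) (fAux b y c z) := by
  by_cases ha : a = 0 <;> by_cases hb : b = 0 <;> by_cases hc : c = 0 <;>
    simp_all [fAux, Nat.add_eq_zero]

lemma fAux_comm (a b x y : ℕ) (hx : a = 0 → x = 0) (hy : b = 0 → y = 0) :
    fAux a x b y = fAux b y a x := by
  by_cases ha : a = 0 <;> by_cases hb : b = 0 <;> simp_all [fAux]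

lemma fAux_unit (a x : ℕ) (hx : a = 0 → x = 0) : fAux a x 0 0 = x := by
  by_cases ha : a = 0 <;> simp_all [fAux]

lemma equiv_invariants {u v : SPTerm A} (h : SPEquiv u v) :
    nT u = nT v ∧ slT u = slT v ∧ plT u = plT v := by
  induction h with
  | refl => exact ⟨rfl, rfl, rfl⟩
  | symm _ ih => exact ⟨ih.1.symm, ih.2.1.symm, ih.2.2.symm⟩
  | trans _ _ ih1 ih2 =>
    exact ⟨ih1.1.trans ih2.1, ih1.2.1.trans ih2.2.1, ih1.2.2.trans ih2.2.2⟩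
  | seqCongr _ _ ih1 ih2 =>
    refine ⟨?_, ?_, ?_⟩ <;>
      simp [nT, slT, plT, ih1.1, ih1.2.1, ih1.2.2, ih2.1, ih2.2.1, ih2.2.2]
  | parCongr _ _ ih1 ih2 =>
    refine ⟨?_, ?_, ?_⟩ <;>
      simp [nT, slT, plT, ih1.1, ih1.2.1, ih1.2.2, ih2.1, ih2.2.1, ih2.2.2]
  | seqAssoc u v w =>
    refine ⟨by simp [nT, Nat.add_assoc], by simp [slT, Nat.add_assoc], ?_⟩
    simp only [plT, nT]
    exact fAux_assoc _ _ _ _ _ _ (fun h => (plT_zero_iff v).2 h)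
  | parAssoc u v w =>
    refine ⟨by simp [nT, Nat.add_assoc], ?_, by simp [plT, Nat.add_assoc]⟩
    simp only [slT, nT]
    exact fAux_assoc _ _ _ _ _ _ (fun h => (slT_zero_iff v).2 h)
  | parComm u v =>
    refine ⟨by simp [nT, Nat.add_comm], ?_, by simp [plT, Nat.add_comm]⟩
    simp only [slT]
    exact fAux_comm _ _ _ _ (fun h => (slT_zero_iff u).2 h)
      (fun h => (slT_zero_iff v).2 h)
  | seqOneLeft u =>
    refine ⟨by simp [nT], by simp [slT], ?_⟩
    simp [plT, nT, fAux]
  | seqOneRight u =>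
    refine ⟨by simp [nT], by simp [slT], ?_⟩
    simp only [plT, nT]
    exact fAux_unit _ _ (fun h => (plT_zero_iff u).2 h)
  | parOne u =>
    refine ⟨by simp [nT], ?_, by simp [plT]⟩
    simp only [slT, nT]
    exact fAux_unit _ _ (fun h => (slT_zero_iff u).2 h)

/-- Atom count of a pomset. -/
def nP : Pomset A → ℕ :=
  Quotient.lift nT fun _ _ h => (equiv_invariants h).1

/-- Sequential factor count of a pomset. -/
def slP : Pomset A → ℕ :=
  Quotient.lift slT fun _ _ h => (equiv_invariants h).2.1

/-- Parallel factor count of a pomset. -/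
def plP : Pomset A → ℕ :=
  Quotient.lift plT fun _ _ h => (equiv_invariants h).2.2

@[simp] lemma nP_eps : nP (Pomset.eps : Pomset A) = 0 := rfl
@[simp] lemma nP_atom (a : A) : nP (Pomset.atom a) = 1 := rfl

@[simp] lemma nP_seq (V W : Pomset A) : nP (V.seq W) = nP V + nP W :=
  Quotient.inductionOn₂ V W fun _ _ => rfl

@[simp] lemma nP_par (V W : Pomset A) : nP (V.par W) = nP V + nP W :=
  Quotient.inductionOn₂ V W fun _ _ => rfl

@[simp] lemma slP_seq (V W : Pomset A) : slP (V.seq W) = slP V + slP W :=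
  Quotient.inductionOn₂ V W fun _ _ => rfl

@[simp] lemma plP_par (V W : Pomset A) : plP (V.par W) = plP V + plP W :=
  Quotient.inductionOn₂ V W fun _ _ => rfl

lemma slP_zero_iff (U : Pomset A) : slP U = 0 ↔ nP U = 0 :=
  Quotient.inductionOn U fun u => slT_zero_iff u

lemma plP_zero_iff (U : Pomset A) : plP U = 0 ↔ nP U = 0 :=
  Quotient.inductionOn U fun u => plT_zero_iff u

lemma slP_big_plP_one (U : Pomset A) (h : 2 ≤ slP U) : plP U = 1 :=
  Quotient.inductionOn U (fun u h => slT_big_plT_one u h) h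

lemma plP_big_slP_one (U : Pomset A) (h : 2 ≤ plP U) : slP U = 1 :=
  Quotient.inductionOn U (fun u h => plT_big_slT_one u h) h

lemma nT_zero_equiv_one {u : SPTerm A} (h : nT u = 0) : SPEquiv u SPTerm.one := by
  induction u with
  | one => exact SPEquiv.refl _
  | atom a => simp [nT] at h
  | seq u v ihu ihv =>
    simp only [nT, Nat.add_eq_zero] at h
    exact SPEquiv.trans (SPEquiv.seqCongr (ihu h.1) (ihv h.2))
      (SPEquiv.seqOneLeft _)
  | par u v ihu ihv =>
    simp only [nT, Nat.add_eq_zero] at h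
    exact SPEquiv.trans (SPEquiv.parCongr (ihu h.1) (ihv h.2))
      (SPEquiv.parOne _)

lemma eq_eps_of_nP_zero {U : Pomset A} (h : nP U = 0) : U = Pomset.eps :=
  Quotient.inductionOn U (fun u h => Quotient.sound (nT_zero_equiv_one h)) h

lemma ne_eps_iff {U : Pomset A} : U ≠ Pomset.eps ↔ 1 ≤ nP U := by
  constructor
  · intro h
    rcases Nat.eq_zero_or_pos (nP U) with h0 | h0
    · exact absurd (eq_eps_of_nP_zero h0) h
    · exact h0
  · rintro h rfl
    simp at h

@[simp] lemma seq_eps_left (W : Pomset A) : Pomset.eps.seq W = W :=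
  Quotient.inductionOn W fun w => Quotient.sound (SPEquiv.seqOneLeft w)

@[simp] lemma seq_eps_right (V : Pomset A) : V.seq Pomset.eps = V :=
  Quotient.inductionOn V fun v => Quotient.sound (SPEquiv.seqOneRight v)

@[simp] lemma parProd_cons (V : Pomset A) (l : List (Pomset A)) :
    Pomset.parProd (V :: l) = V.par (Pomset.parProd l) := rfl

lemma nP_parProd (l : List (Pomset A)) :
    nP (Pomset.parProd l) = (l.map nP).sum := by
  induction l with
  | nil => rfl
  | cons V l ih => simp [ih]

/-- Class facts -/
lemma primitive_nP {U : Pomset A} (h : U.Primitive) : nP U = 1 := by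
  obtain ⟨a, rfl⟩ := h; simp

lemma sequential_facts {U : Pomset A} (h : U.Sequential) :
    2 ≤ nP U ∧ 2 ≤ slP U := by
  obtain ⟨V, W, hV, hW, rfl⟩ := h
  have h1 := ne_eps_iff.1 hV
  have h2 := ne_eps_iff.1 hW
  have h3 : 1 ≤ slP V := by
    rcases Nat.eq_zero_or_pos (slP V) with h0 | h0
    · rw [(slP_zero_iff V).1 h0] at h1; omega
    · exact h0
  have h4 : 1 ≤ slP W := by
    rcases Nat.eq_zero_or_pos (slP W) with h0 | h0
    · rw [(slP_zero_iff W).1 h0] at h2; omega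
    · exact h0
  constructor <;> simp <;> omega

lemma parallel_facts {U : Pomset A} (h : U.Parallel) :
    2 ≤ nP U ∧ 2 ≤ plP U := by
  obtain ⟨V, W, hV, hW, rfl⟩ := h
  have h1 := ne_eps_iff.1 hV
  have h2 := ne_eps_iff.1 hW
  have h3 : 1 ≤ plP V := by
    rcases Nat.eq_zero_or_pos (plP V) with h0 | h0
    · rw [(plP_zero_iff V).1 h0] at h1; omega
    · exact h0
  have h4 : 1 ≤ plP W := by
    rcases Nat.eq_zero_or_pos (plP W) with h0 | h0
    · rw [(plP_zero_iff W).1 h0] at h2; omega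
    · exact h0
  constructor <;> simp <;> omega

lemma not_seq_and_par {U : Pomset A} (hs : U.Sequential) (hp : U.Parallel) :
    False := by
  have h1 := (sequential_facts hs).2
  have h2 := (parallel_facts hp).2
  have := slP_big_plP_one U h1
  omega

lemma parallel_of_parProd (l : List (Pomset A)) (hlen : 2 ≤ l.length)
    (hne : ∀ V ∈ l, V ≠ Pomset.eps) : (Pomset.parProd l).Parallel := by
  match l with
  | V :: W :: r =>
    refine ⟨V, Pomset.parProd (W :: r), hne V (by simp), ?_, rfl⟩
    rw [ne_eps_iff, nP_parProd]
    have := ne_eps_iff.1 (hne W (by simp))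
    simp; omega

end Aux
section Runs
variable {A Q : Type} {M : PA A Q}

lemma eps_run (hws : WellStructured M) {q : Q} {U : Pomset A} {q' : Q}
    (h : Run M q U q') : U = Pomset.eps → q = q' := by
  induction h with
  | triv q => intro _; rfl
  | seqUnit _ =>
    intro he
    have := congrArg nP he
    simp at this
  | comp _ _ ih1 ih2 =>
    intro he
    have hn := congrArg nP he
    simp [Nat.add_eq_zero] at hn
    exact (ih1 (eq_eps_of_nP_zero hn.1)).trans (ih2 (eq_eps_of_nP_zero hn.2))
  | parUnit l hγ hacc hrun ih =>
    intro he
    match l with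
    | [] =>
      have := hws.1 _ _ ⟨_, hγ⟩
      simp at this
    | x :: l' =>
      have hx1 : x.1 ∈ (↑(((x :: l').map Prod.fst)) : Multiset Q) := by simp
      have hnacc := (hws.2 _ _ _ hx1 ⟨_, hγ⟩).1
      have hxeps : x.2.1 = Pomset.eps := by
        have hn := congrArg nP he
        rw [nP_parProd] at hn
        simp [Nat.add_eq_zero] at hn
        exact eq_eps_of_nP_zero hn.1
      have heq : x.1 = x.2.2 := ih x (by simp) hxeps
      exact absurd (heq ▸ hacc x (by simp)) hnacc

lemma run_cases (hws : WellStructured M) {q : Q} {U : Pomset A} {q' : Q}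
    (h : Run M q U q') :
    TrivialRun M q U q' ∨ SeqUnitRun M q U q' ∨ CompositeRun M q U q' ∨
      ParUnitRun M q U q' := by
  induction h with
  | triv q => exact Or.inl ⟨rfl, rfl⟩
  | seqUnit hd => exact Or.inr (Or.inl ⟨_, rfl, hd⟩)
  | comp h1 h2 ih1 ih2 =>
    rename_i q V q'' W q'
    by_cases hV : V = Pomset.eps
    · have hq : q = q'' := eps_run hws h1 hV
      subst hV; subst hq
      rw [seq_eps_left]
      exact ih2
    · by_cases hW : W = Pomset.eps
      · have hq : q'' = q' := eps_run hws h2 hW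
        subst hW; subst hq
        rw [seq_eps_right]
        exact ih1
      · exact Or.inr (Or.inr (Or.inl ⟨V, W, q'', rfl, h1, h2,
          fun ht => hV ht.1, fun ht => hW ht.1⟩))
  | parUnit l hγ hacc hrun _ =>
    exact Or.inr (Or.inr (Or.inr ⟨l, hγ, fun x hx => ⟨hacc x hx, hrun x hx⟩, rfl⟩))

lemma composite_sequential (hws : WellStructured M) {q : Q} {U : Pomset A}
    {q' : Q} (h : CompositeRun M q U q') : U.Sequential := by
  obtain ⟨V, W, q'', rfl, h1, h2, ht1, ht2⟩ := h
  refine ⟨V, W, ?_, ?_, rfl⟩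
  · intro hV; exact ht1 ⟨hV, eps_run hws h1 hV⟩
  · intro hW; exact ht2 ⟨hW, eps_run hws h2 hW⟩

lemma parUnit_parallel (hws : WellStructured M) {q : Q} {U : Pomset A}
    {q' : Q} (h : ParUnitRun M q U q') : U.Parallel := by
  obtain ⟨l, hγ, hcomp, rfl⟩ := h
  apply parallel_of_parProd
  · have h2 := hws.1 _ _ ⟨_, hγ⟩
    simpa using h2
  · intro V hV
    rw [List.mem_map] at hV
    obtain ⟨x, hx, rfl⟩ := hV
    intro heps
    have hx1 : x.1 ∈ (↑(l.map Prod.fst) : Multiset Q) := by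
      simp only [Multiset.mem_coe, List.mem_map]
      exact ⟨x, hx, rfl⟩
    have hnacc := (hws.2 _ _ _ hx1 ⟨_, hγ⟩).1
    have heq : x.1 = x.2.2 := eps_run hws (hcomp x hx).2 heps
    exact hnacc (heq ▸ (hcomp x hx).1)

end Runs

/-- In a well-structured automaton, the kind of a run is determined by the
kind of the pomset labelling it. -/
theorem well_structured_no_confusion {A Q : Type} (M : PA A Q)
    (hws : WellStructured M) {q : Q} {U : Pomset A} {q' : Q}
    (h : Run M q U q') :
    (TrivialRun M q U q' ↔ U.IsEmptyP) ∧
    (SeqUnitRun M q U q' ↔ U.Primitive) ∧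
    (CompositeRun M q U q' ↔ U.Sequential) ∧
    (ParUnitRun M q U q' ↔ U.Parallel) := by
  have hcases := run_cases hws h
  refine ⟨⟨fun ht => ht.1, fun he => ⟨he, eps_run hws h he⟩⟩, ?_, ?_, ?_⟩
  · constructor
    · rintro ⟨a, rfl, _⟩; exact ⟨a, rfl⟩
    · intro hp
      have hn := primitive_nP hp
      rcases hcases with ht | hs | hc | hpu
      · rw [ht.1] at hn; simp at hn
      · exact hs
      · have := (sequential_facts (composite_sequential hws hc)).1; omega
      · have := (parallel_facts (parUnit_parallel hws hpu)).1; omega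
  · constructor
    · exact composite_sequential hws
    · intro hseq
      have hfacts := sequential_facts hseq
      rcases hcases with ht | hs | hc | hpu
      · rw [ht.1] at hfacts; simp at hfacts
      · obtain ⟨a, rfl, _⟩ := hs
        simp at hfacts
      · exact hc
      · exact absurd (not_seq_and_par hseq (parUnit_parallel hws hpu)) not_false
  · constructor
    · exact parUnit_parallel hws
    · intro hpar
      have hfacts := parallel_facts hpar
      rcases hcases with ht | hs | hc | hpu
      · rw [ht.1] at hfacts; simp at hfacts
      · obtain ⟨a, rfl, _⟩ := hs
        simp at hfacts
      · exact absurd (not_seq_and_par (composite_sequential hws hc) hpar) not_false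
      · exact hpu

end WBKA
end

section
/- A pomset automaton A is well-structured if and only if it is 2-forking, parsimonious, and flat-branching. -/
namespace WBKA

/-- Number of atoms in an sp-term. -/
def tsize {A : Type} : SPTerm A → ℕ
  | .one => 0
  | .atom _ => 1
  | .seq u v => tsize u + tsize v
  | .par u v => tsize u + tsize v

lemma tsize_equiv {A : Type} {u v : SPTerm A} (h : SPEquiv u v) : tsize u = tsize v := by
  induction h <;> simp_all [tsize] <;> omega

/-- Number of atoms in a pomset. -/
def psize {A : Type} : Pomset A → ℕ :=
  Quotient.lift tsize (fun _ _ h => tsize_equiv h)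

lemma tsize_zero_equiv_one {A : Type} (u : SPTerm A) (h : tsize u = 0) :
    SPEquiv u SPTerm.one := by
  induction u with
  | one => exact SPEquiv.refl _
  | atom a => simp [tsize] at h
  | seq u v ihu ihv =>
      simp [tsize] at h
      exact SPEquiv.trans (SPEquiv.seqCongr (ihu h.1) (ihv h.2)) (SPEquiv.seqOneLeft _)
  | par u v ihu ihv =>
      simp [tsize] at h
      exact SPEquiv.trans (SPEquiv.parCongr (ihu h.1) (ihv h.2)) (SPEquiv.parOne _)

lemma psize_eq_zero_iff {A : Type} (U : Pomset A) : psize U = 0 ↔ U = Pomset.eps := by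
  constructor
  · induction U using Quotient.ind with
    | _ u => exact fun h => Quotient.sound (tsize_zero_equiv_one u h)
  · rintro rfl; rfl

lemma psize_seq {A : Type} (U V : Pomset A) : psize (U.seq V) = psize U + psize V := by
  induction U using Quotient.ind
  induction V using Quotient.ind
  rfl

lemma psize_par {A : Type} (U V : Pomset A) : psize (U.par V) = psize U + psize V := by
  induction U using Quotient.ind
  induction V using Quotient.ind
  rfl

lemma atom_ne_eps {A : Type} (a : A) : Pomset.atom a ≠ Pomset.eps := by
  intro h
  have := (psize_eq_zero_iff (Pomset.atom a)).mpr h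
  simp [psize, Pomset.atom, Pomset.mk, tsize] at this

lemma seq_eq_eps {A : Type} {U V : Pomset A} (h : U.seq V = Pomset.eps) :
    U = Pomset.eps ∧ V = Pomset.eps := by
  have h0 : psize (U.seq V) = 0 := (psize_eq_zero_iff _).mpr h
  rw [psize_seq] at h0
  exact ⟨(psize_eq_zero_iff U).mp (by omega), (psize_eq_zero_iff V).mp (by omega)⟩

lemma parProd_eq_eps {A : Type} {l : List (Pomset A)} (h : Pomset.parProd l = Pomset.eps) :
    ∀ U ∈ l, U = Pomset.eps := by
  induction l with
  | nil => simp
  | cons U l ih =>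
      have h0 : psize (Pomset.parProd (U :: l)) = 0 := (psize_eq_zero_iff _).mpr h
      rw [show Pomset.parProd (U :: l) = U.par (Pomset.parProd l) from rfl, psize_par] at h0
      have hU : U = Pomset.eps := (psize_eq_zero_iff U).mp (by omega)
      have hl : Pomset.parProd l = Pomset.eps := (psize_eq_zero_iff _).mp (by omega)
      intro V hV
      rcases List.mem_cons.mp hV with rfl | hV
      · exact hU
      · exact ih hl V hV

/-- In a well-structured automaton, an eps-run into an accepting state starts
in an accepting state. -/
lemma run_eps_acc {A Q : Type} {M : PA A Q} (hws : WellStructured M) :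
    ∀ {q : Q} {U : Pomset A} {q' : Q}, Run M q U q' → U = Pomset.eps →
      q' ∈ M.acc → q ∈ M.acc := by
  intro q U q' hrun
  induction hrun with
  | triv q => exact fun _ h => h
  | seqUnit h => exact fun he => absurd he (atom_ne_eps _)
  | comp h1 h2 ih1 ih2 =>
      intro he hacc
      obtain ⟨h1e, h2e⟩ := seq_eq_eps he
      exact ih1 h1e (ih2 h2e hacc)
  | @parUnit q q' l hγ haccl hruns ih =>
      intro he _
      have hne : (M.γ q (↑(l.map Prod.fst) : Multiset Q)).Nonempty := ⟨q', hγ⟩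
      have hcard := hws.1 _ _ hne
      have hlen : 2 ≤ l.length := by
        simpa [Multiset.coe_card] using hcard
      have hlne : l ≠ [] := by
        intro h; subst h; simp at hlen
      obtain ⟨x, hx⟩ : ∃ x, x ∈ l := List.exists_mem_of_ne_nil l hlne
      have hxeps : x.2.1 = Pomset.eps :=
        parProd_eq_eps he x.2.1 (List.mem_map.mpr ⟨x, hx, rfl⟩)
      have hxacc : x.1 ∈ M.acc := ih x hx hxeps (haccl x hx)
      have hxmem : x.1 ∈ (↑(l.map Prod.fst) : Multiset Q) := by
        simp only [Multiset.mem_coe]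
        exact List.mem_map.mpr ⟨x, hx, rfl⟩
      exact absurd hxacc (hws.2 q _ x.1 hxmem hne).1

/-- A pomset automaton is well-structured iff it is 2-forking, parsimonious,
and flat-branching. -/
theorem well_structured_iff_triple {A Q : Type} (M : PA A Q) :
    WellStructured M ↔ NForking M 2 ∧ Parsimonious M ∧ FlatBranching M := by
  constructor
  · intro hws
    refine ⟨hws.1, ?_, ?_⟩
    · intro p φ q hq hne hlang
      obtain ⟨q', hq'acc, hrun⟩ := hlang
      have : q ∈ M.acc := run_eps_acc hws hrun rfl hq'acc
      exact (hws.2 p φ q hq hne).1 this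
    · intro p φ q hq hne ψ
      exact (hws.2 p φ q hq hne).2 ψ
  · rintro ⟨h2, hpars, hflat⟩
    refine ⟨h2, ?_⟩
    intro p φ q hq hne
    refine ⟨?_, hflat p φ q hq hne⟩
    intro hacc
    exact hpars p φ q hq hne ⟨q, hacc, Run.triv q⟩

end WBKA
end

section
/- Define the relation ⇝_A on states of a pomset automaton A as the smallest relation satisfying: p ⇝ p; if p ⇝ r and r ⇝ q then p ⇝ q; and if q ∈ γ(p, ⦃q₁,…,qₙ⦄) and for each i there exists qᵢ′ ∈ F with qᵢ ⇝ qᵢ′, then p ⇝ q. Then p ⇝_A q holds if and only if there is a run p →^1_A q labelled by the empty pomset. -/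
namespace WBKA

/-! An empty run can contain no sequential unit run, since pomset size is additive and atoms have
size one; so it is built from trivial runs, compositions, and parallel unit runs whose branches
are again empty runs. These are exactly the rules generating `Leadsto`. -/

def SPTerm.size {A : Type} : SPTerm A → ℕ
  | .one => 0
  | .atom _ => 1
  | .seq u v => u.size + v.size
  | .par u v => u.size + v.size

theorem SPEquiv.size_eq {A : Type} {u v : SPTerm A} (h : SPEquiv u v) : u.size = v.size := by
  induction h <;> grind [SPTerm.size]

theorem SPTerm.equiv_one_of_size_eq_zero {A : Type} {u : SPTerm A} (h : u.size = 0) :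
    SPEquiv u .one := by
  induction u with
  | one => exact .refl _
  | atom a => simp [SPTerm.size] at h
  | seq u v ihu ihv =>
    simp only [SPTerm.size, Nat.add_eq_zero_iff] at h
    exact .trans (.seqCongr (ihu h.1) (ihv h.2)) (.seqOneLeft _)
  | par u v ihu ihv =>
    simp only [SPTerm.size, Nat.add_eq_zero_iff] at h
    exact .trans (.parCongr (ihu h.1) (ihv h.2)) (.parOne _)

namespace Pomset

variable {A : Type}

def size : Pomset A → ℕ :=
  Quotient.lift SPTerm.size fun _ _ h => SPEquiv.size_eq h

theorem size_eps : (eps : Pomset A).size = 0 := rfl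

theorem size_seq (U V : Pomset A) : (U.seq V).size = U.size + V.size := by
  induction U using Quotient.inductionOn
  induction V using Quotient.inductionOn
  rfl

theorem size_par (U V : Pomset A) : (U.par V).size = U.size + V.size := by
  induction U using Quotient.inductionOn
  induction V using Quotient.inductionOn
  rfl

theorem size_eq_zero {U : Pomset A} : U.size = 0 ↔ U = eps := by
  refine ⟨fun h => ?_, fun h => h ▸ size_eps⟩
  induction U using Quotient.inductionOn with
  | h u => exact Quotient.sound (SPTerm.equiv_one_of_size_eq_zero h)

theorem atom_ne_eps (a : A) : atom a ≠ eps :=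
  fun h => one_ne_zero (size_eq_zero.2 h : (1 : ℕ) = 0)

theorem seq_eq_eps {U V : Pomset A} : U.seq V = eps ↔ U = eps ∧ V = eps := by
  simp only [← size_eq_zero, size_seq, Nat.add_eq_zero_iff]

theorem par_eq_eps {U V : Pomset A} : U.par V = eps ↔ U = eps ∧ V = eps := by
  simp only [← size_eq_zero, size_par, Nat.add_eq_zero_iff]

theorem parProd_eq_eps {l : List (Pomset A)} : parProd l = eps ↔ ∀ U ∈ l, U = eps := by
  induction l with
  | nil => simp [parProd, eps]
  | cons U l ih =>
    simp only [parProd, List.foldr_cons, List.forall_mem_cons] at ih ⊢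
    rw [par_eq_eps, ih]

end Pomset

variable {A Q : Type} {M : PA A Q}

theorem Leadsto.run_eps {p q : Q} (h : Leadsto M p q) : Run M p Pomset.eps q := by
  induction h with
  | refl p => exact .triv p
  | trans _ _ ih₁ ih₂ => simpa only [Pomset.seq_eq_eps.2 ⟨rfl, rfl⟩] using Run.comp ih₁ ih₂
  | fork l hγ hacc _ ih =>
    have hrun := Run.parUnit (M := M) (l.map fun x => (x.1, Pomset.eps, x.2))
      (by simpa [Function.comp_def] using hγ) (List.forall_mem_map.2 hacc)
      (List.forall_mem_map.2 ih)
    convert hrun using 1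
    refine (Pomset.parProd_eq_eps.2 ?_).symm
    simp +contextual

theorem Run.leadsto_of_eq_eps {p q : Q} {U : Pomset A} (h : Run M p U q) (hU : U = Pomset.eps) :
    Leadsto M p q := by
  induction h with
  | triv q => exact .refl q
  | seqUnit _ => exact absurd hU (Pomset.atom_ne_eps _)
  | comp _ _ ih₁ ih₂ =>
    obtain ⟨hU₁, hU₂⟩ := Pomset.seq_eq_eps.1 hU
    exact .trans (ih₁ hU₁) (ih₂ hU₂)
  | parUnit l hγ hacc _ ih =>
    have hbranches : ∀ x ∈ l, x.2.1 = Pomset.eps :=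
      List.forall_mem_map.1 (Pomset.parProd_eq_eps.1 hU)
    exact .fork (l.map fun x => (x.1, x.2.2)) (by simpa [Function.comp_def] using hγ)
      (List.forall_mem_map.2 hacc) (List.forall_mem_map.2 fun x hx => ih x hx (hbranches x hx))

/-- The relation `⇝` characterises runs labelled by the empty pomset. -/
theorem leadsto_iff_empty_run {A Q : Type} (M : PA A Q) (p q : Q) :
    Leadsto M p q ↔ Run M p Pomset.eps q :=
  ⟨Leadsto.run_eps, fun h => h.leadsto_of_eq_eps rfl⟩

end WBKA
end

section
/- Define pdepth : sr-expressions → ℕ by pdepth(0) = pdepth(1) = pdepth(a) = 0, pdepth(e+f) = pdepth(e·f) = max(pdepth e, pdepth f), pdepth(e ∥ f) = max(pdepth e, pdepth f) + 1, pdepth(e*) = pdepth e. Then: (1) if e′ ∈ δ_Σ(e, a) then pdepth(e′) ≤ pdepth(e); (2) if e′ ∈ γ_Σ(e, φ) then pdepth(e′) ≤ pdepth(e); (3) if f ∈ φ and γ_Σ(e, φ) ≠ ∅ then pdepth(f) < pdepth(e). Consequently the syntactic pomset automaton is fork-acyclic. -/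
namespace WBKA

lemma pdepth_deltaS {A : Type} : ∀ (e : SR A) (a : A) (e' : SR A),
    e' ∈ deltaS e a → pdepth e' ≤ pdepth e := by
  intro e
  induction e with
  | zero => intro a e' h; exact absurd h (by simp [deltaS])
  | one => intro a e' h; exact absurd h (by simp [deltaS])
  | atom b =>
    intro a e' h
    obtain ⟨h1, _⟩ := h
    simp [h1, pdepth]
  | plus e f ih1 ih2 =>
    intro a e' h
    rcases h with h | h
    · exact le_trans (ih1 a e' h) (le_max_left _ _)
    · exact le_trans (ih2 a e' h) (le_max_right _ _)
  | seq e f ih1 ih2 =>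
    intro a e' h
    rcases h with ⟨g, hg, rfl⟩ | ⟨h, _⟩
    · exact max_le_max (ih1 a g hg) le_rfl
    · exact le_trans (ih2 a e' h) (le_max_right _ _)
  | par e f ih1 ih2 =>
    intro a e' h; exact absurd h (by simp [deltaS])
  | star e ih =>
    intro a e' h
    obtain ⟨g, hg, rfl⟩ := h
    exact max_le (ih a g hg) le_rfl

lemma pdepth_gammaS {A : Type} : ∀ (e : SR A) (φ : Multiset (SR A)) (e' : SR A),
    e' ∈ gammaS e φ → pdepth e' ≤ pdepth e := by
  intro e
  induction e with
  | zero => intro φ e' h; exact absurd h (by simp [gammaS])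
  | one => intro φ e' h; exact absurd h (by simp [gammaS])
  | atom b => intro φ e' h; exact absurd h (by simp [gammaS])
  | plus e f ih1 ih2 =>
    intro φ e' h
    rcases h with h | h
    · exact le_trans (ih1 φ e' h) (le_max_left _ _)
    · exact le_trans (ih2 φ e' h) (le_max_right _ _)
  | seq e f ih1 ih2 =>
    intro φ e' h
    rcases h with ⟨g, hg, rfl⟩ | ⟨h, _⟩
    · exact max_le_max (ih1 φ g hg) le_rfl
    · exact le_trans (ih2 φ e' h) (le_max_right _ _)
  | par e f ih1 ih2 =>
    intro φ e' h
    obtain ⟨h1, _⟩ := h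
    simp [h1, pdepth]
  | star e ih =>
    intro φ e' h
    obtain ⟨g, hg, rfl⟩ := h
    exact max_le (ih φ g hg) le_rfl

lemma pdepth_fork {A : Type} : ∀ (e : SR A) (φ : Multiset (SR A)) (f : SR A),
    f ∈ φ → (gammaS e φ).Nonempty → pdepth f < pdepth e := by
  intro e
  induction e with
  | zero => intro φ f _ ⟨x, hx⟩; exact absurd hx (by simp [gammaS])
  | one => intro φ f _ ⟨x, hx⟩; exact absurd hx (by simp [gammaS])
  | atom b => intro φ f _ ⟨x, hx⟩; exact absurd hx (by simp [gammaS])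
  | plus e f ih1 ih2 =>
    rintro φ g hg ⟨x, hx | hx⟩
    · exact lt_of_lt_of_le (ih1 φ g hg ⟨x, hx⟩) (le_max_left _ _)
    · exact lt_of_lt_of_le (ih2 φ g hg ⟨x, hx⟩) (le_max_right _ _)
  | seq e f ih1 ih2 =>
    rintro φ g hg ⟨x, ⟨y, hy, rfl⟩ | ⟨hx, _⟩⟩
    · exact lt_of_lt_of_le (ih1 φ g hg ⟨y, hy⟩) (le_max_left _ _)
    · exact lt_of_lt_of_le (ih2 φ g hg ⟨x, hx⟩) (le_max_right _ _)
  | par e f ih1 ih2 =>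
    rintro φ g hg ⟨x, _, rfl⟩
    have : g = e ∨ g = f := by
      simpa using hg
    have hle : pdepth g ≤ max (pdepth e) (pdepth f) := by
      rcases this with rfl | rfl
      · exact le_max_left _ _
      · exact le_max_right _ _
    exact Nat.lt_succ_of_le hle
  | star e ih =>
    rintro φ g hg ⟨x, y, hy, rfl⟩
    exact ih φ g hg ⟨y, hy⟩

lemma pdepth_supports {A : Type} {q' q : SR A} (h : Supports (synPA A) q' q) :
    pdepth q' ≤ pdepth q := by
  induction h with
  | refl q => exact le_rfl
  | trans _ _ ih1 ih2 => exact le_trans ih1 ih2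
  | deltaStep h => exact pdepth_deltaS _ _ _ h
  | gammaStep h => exact pdepth_gammaS _ _ _ h
  | forkStep hmem hne => exact le_of_lt (pdepth_fork _ _ _ hmem hne)

/-- `pdepth` is non-increasing along derivatives, strictly decreasing into fork
targets; consequently the syntactic pomset automaton is fork-acyclic. -/
theorem syntactic_pa_fork_acyclic {A : Type} :
    (∀ (e : SR A) (a : A) (e' : SR A), e' ∈ deltaS e a → pdepth e' ≤ pdepth e) ∧
    (∀ (e : SR A) (φ : Multiset (SR A)) (e' : SR A),
      e' ∈ gammaS e φ → pdepth e' ≤ pdepth e) ∧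
    (∀ (e : SR A) (φ : Multiset (SR A)) (f : SR A),
      f ∈ φ → (gammaS e φ).Nonempty → pdepth f < pdepth e) ∧
    ForkAcyclic (synPA A) := by
  refine ⟨pdepth_deltaS, pdepth_gammaS, pdepth_fork, ?_⟩
  intro q φ r hmem hne hsup
  exact absurd (pdepth_fork q φ r hmem hne) (not_lt.mpr (pdepth_supports hsup))

end WBKA
end

section
/- For a finite, fork-acyclic pomset automaton A = ⟨Q, F, δ, γ⟩, and states p, r with p in the ⪯-cycle-class Q′ of some fixed state q, define the sr-expression e_{pr} = Σ_{r ∈ δ(p,a)} a + Σ_{r ∈ γ(p, ⦃s₁,…,sₙ⦄)} e_{s₁} ∥ ⋯ ∥ e_{sₙ}, where each e_{sᵢ} is an sr-expression with ⟦e_{sᵢ}⟧ = L_A(sᵢ) (available since sᵢ ≺_A p by fork-acyclicity). Then U ∈ ⟦e_{pr}⟧ if and only if p →^U_A r is a unit run. -/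
namespace WBKA

/-!
The expression `e_{pr}` is built exactly like the two unit-run rules, except that a fork target
`s` is represented by the expression `e_s` instead of by accepting runs from `s`. Fork-acyclicity
puts every fork target of `p` strictly below `p`, where `⟦e_s⟧ = L_A(s)` holds, so the two
descriptions agree fork by fork.
-/

theorem ForkAcyclic.supports_lt {A Q : Type} {M : PA A Q} (hfa : ForkAcyclic M) {p s : Q}
    {φ : Multiset Q} (hs : s ∈ φ) (hφ : (M.γ p φ).Nonempty) :
    Supports M s p ∧ ¬ Supports M p s :=
  ⟨Supports.forkStep hs hφ, hfa p φ s hs hφ⟩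

theorem parUnitRun_iff {A Q : Type} (M : PA A Q) (p r : Q) (U : Pomset A) :
    ParUnitRun M p U r ↔ ∃ l : List (Q × Pomset A),
      r ∈ M.γ p (↑(l.map Prod.fst) : Multiset Q) ∧
      (∀ x ∈ l, x.2 ∈ M.lang x.1) ∧
      U = Pomset.parProd (l.map Prod.snd) := by
  constructor
  · rintro ⟨l, hγ, hl, rfl⟩
    refine ⟨l.map fun x => (x.1, x.2.1), ?_, ?_, ?_⟩
    · simpa [Function.comp_def] using hγ
    · simp only [List.mem_map]
      rintro _ ⟨x, hx, rfl⟩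
      exact ⟨x.2.2, hl x hx⟩
    · simp only [List.map_map]
      rfl
  · rintro ⟨l, hγ, hl, rfl⟩
    have : Nonempty Q := ⟨p⟩
    choose! t ht using hl
    refine ⟨l.map fun x => (x.1, x.2, t x), ?_, ?_, ?_⟩
    · simpa [Function.comp_def] using hγ
    · simp only [List.mem_map]
      rintro _ ⟨x, hx, rfl⟩
      exact ht x hx
    · simp only [List.map_map]
      rfl

theorem automata_to_expressions_small_step_general {A Q : Type}
    (M : PA A Q) (hfa : ForkAcyclic M) (p r : Q)
    (es : Q → SR A)
    (hes : ∀ s : Q, Supports M s p → ¬ Supports M p s → sem (es s) = M.lang s)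
    (epr : SR A)
    (hepr : sem epr =
      {U | ∃ a : A, U = Pomset.atom a ∧ r ∈ M.δ p a} ∪
      {U | ∃ l : List (Q × Pomset A),
        r ∈ M.γ p (↑(l.map Prod.fst) : Multiset Q) ∧
        (∀ x ∈ l, x.2 ∈ sem (es x.1)) ∧
        U = Pomset.parProd (l.map Prod.snd)})
    (U : Pomset A) :
    U ∈ sem epr ↔ UnitRun M p U r := by
  rw [hepr, UnitRun, parUnitRun_iff]
  refine or_congr Iff.rfl (exists_congr fun l => and_congr_right fun hγ =>
    and_congr_left fun _ => forall₂_congr fun x hx => ?_)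
  have hs : x.1 ∈ (↑(l.map Prod.fst) : Multiset Q) :=
    Multiset.mem_coe.mpr (List.mem_map_of_mem hx)
  obtain ⟨hsp, hps⟩ := hfa.supports_lt hs ⟨r, hγ⟩
  rw [hes x.1 hsp hps]

/-- Correctness of the expression `e_{pr}` describing unit runs from `p` to `r`
in a finite, fork-acyclic pomset automaton, given expressions `e_s` for the
languages of all states `s ≺ p`. -/
theorem automata_to_expressions_small_step {A Q : Type} [Fintype Q]
    (M : PA A Q) (hfa : ForkAcyclic M) (p r : Q)
    (es : Q → SR A)
    (hes : ∀ s : Q, Supports M s p → ¬ Supports M p s → sem (es s) = M.lang s)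
    (epr : SR A)
    (hepr : sem epr =
      {U | ∃ a : A, U = Pomset.atom a ∧ r ∈ M.δ p a} ∪
      {U | ∃ l : List (Q × Pomset A),
        r ∈ M.γ p (↑(l.map Prod.fst) : Multiset Q) ∧
        (∀ x ∈ l, x.2 ∈ sem (es x.1)) ∧
        U = Pomset.parProd (l.map Prod.snd)})
    (U : Pomset A) :
    U ∈ sem epr ↔ UnitRun M p U r :=
  automata_to_expressions_small_step_general M hfa p r es hes epr hepr U

end WBKA
end
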